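/- arXiv:2310.07214 — 3 statements merged into one kernel-verified Lean document; each statement's English description precedes it below -/
import Mathlib

section
/- Let G be a finite simple odd-hole-free graph, let u be a vertex of G, let k be a positive integer with χ(G) > k, and let c be a proper coloring of G − u with k colors. Then for any two distinct colors i and j that are each assigned by c to at least one neighbor of u, there exist adjacent vertices v, w ∈ N(u) with c(v) = i and c(w) = j. -/
/-!
Let `H` be the subgraph of `G - u` induced by the colours `i` and `j`. If no component of `H`
meets both an `i`-coloured and a `j`-coloured neighbour of `u`, swapping `i` and `j` on the
components of the `i`-coloured neighbours frees the colour `i` for `u`, so `G` would be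
`k`-colourable. Otherwise take a shortest path in `H` from an `i`-coloured to a `j`-coloured
neighbour of `u`. Its colours alternate, so its length is odd; by minimality it is induced and
its interior avoids `N(u)`. Closed up through `u` it is therefore an induced odd cycle, which is
a hole unless the path is a single edge.
-/

/-- `G` has an *odd hole*: an induced cycle of odd length at least 5
(a hole is an induced cycle of length at least 4, so odd holes have length at least 5). -/
def SimpleGraph.HasOddHole {V : Type*} (G : SimpleGraph V) : Prop :=
  ∃ n : ℕ, Odd n ∧ 5 ≤ n ∧ Nonempty (SimpleGraph.cycleGraph n ↪g G)

namespace SimpleGraph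

variable {V : Type*} {G : SimpleGraph V}

theorem cycleGraph_adj_iff_val {n : ℕ} {s t : Fin (n + 2)} :
    (cycleGraph (n + 2)).Adj s t ↔ s.val + 1 = t.val ∨ t.val + 1 = s.val ∨
      (s.val = 0 ∧ t.val = n + 1) ∨ (t.val = 0 ∧ s.val = n + 1) := by
  have hs := s.isLt
  have ht := t.isLt
  rw [cycleGraph_adj']
  rcases lt_trichotomy s t with h | rfl | h
  · rw [Fin.coe_sub_iff_lt.mpr h, Fin.sub_val_of_le h.le]
    rw [Fin.lt_def] at h
    omega
  · simp only [sub_self, Fin.val_zero]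
    omega
  · rw [Fin.coe_sub_iff_lt.mpr h, Fin.sub_val_of_le h.le]
    rw [Fin.lt_def] at h
    omega

theorem exists_pathGraph_embedding {f : ℕ → V} {n : ℕ} (hinj : Set.InjOn f (Set.Iic n))
    (hadj : ∀ t < n, G.Adj (f t) (f (t + 1)))
    (hchord : ∀ s t, s + 1 < t → t ≤ n → ¬G.Adj (f s) (f t)) :
    ∃ e : pathGraph (n + 1) ↪g G, ∀ s, e s = f s := by
  refine ⟨⟨⟨fun s => f s, fun s t hst => Fin.ext <| hinj (by simp; omega) (by simp; omega) hst⟩,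
    fun {s t} => ?_⟩, fun _ => rfl⟩
  show G.Adj (f s) (f t) ↔ _
  rw [pathGraph_adj]
  constructor
  · intro h
    by_contra! hne
    rcases lt_trichotomy s.val t.val with hst | hst | hst
    · exact hchord s t (by omega) (by omega) h
    · exact G.irrefl (hst ▸ h)
    · exact hchord t s (by omega) (by omega) h.symm
  · rintro (h | h)
    · simpa [h] using hadj s (by omega)
    · simpa [h] using (hadj t (by omega)).symm

theorem nonempty_cycleGraph_embedding_of_apex {n : ℕ} (e : pathGraph (n + 1) ↪g G) (u : V)
    (hne : ∀ s, e s ≠ u) (hu : ∀ s, G.Adj u (e s) ↔ s.val = 0 ∨ s.val = n) :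
    Nonempty (cycleGraph (n + 2) ↪g G) := by
  let f : Fin (n + 2) → V := Fin.lastCases u e
  refine ⟨⟨⟨f, ?_⟩, ?_⟩⟩
  · intro s t hst
    induction s using Fin.lastCases <;> induction t using Fin.lastCases <;>
      simp_all [f, e.injective.eq_iff, Ne.symm (hne _)]
  · intro s t
    show G.Adj (f s) (f t) ↔ _
    induction s using Fin.lastCases <;> induction t using Fin.lastCases <;>
      simp only [f, Fin.lastCases_last, Fin.lastCases_castSucc, cycleGraph_adj_iff_val,
        Fin.val_last, Fin.val_castSucc, e.map_adj_iff, pathGraph_adj, hu, G.adj_comm _ u,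
        SimpleGraph.irrefl, and_true] <;> omega

namespace Walk

variable {a b : V}

structure IsShortestBetween (P Q : V → Prop) (p : G.Walk a b) : Prop where
  left : P a
  right : Q b
  length_le : ∀ a' b' (q : G.Walk a' b'), P a' → Q b' → p.length ≤ q.length

variable {P Q : V → Prop} {p : G.Walk a b}

theorem IsShortestBetween.not_adj_getVert (hp : p.IsShortestBetween P Q) {s t : ℕ}
    (hst : s + 1 < t) (ht : t ≤ p.length) : ¬G.Adj (p.getVert s) (p.getVert t) := by
  intro hadj
  have := hp.length_le a b ((p.take s).append (cons hadj (p.drop t))) hp.left hp.right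
  simp only [length_append, take_length, length_cons, drop_length] at this
  omega

theorem IsShortestBetween.not_left_getVert (hp : p.IsShortestBetween P Q) {t : ℕ}
    (ht₀ : 0 < t) (ht : t ≤ p.length) : ¬P (p.getVert t) := by
  intro hP
  have := hp.length_le _ b (p.drop t) hP hp.right
  rw [drop_length] at this
  omega

theorem IsShortestBetween.not_right_getVert (hp : p.IsShortestBetween P Q) {t : ℕ}
    (ht : t < p.length) : ¬Q (p.getVert t) := by
  intro hQ
  have := hp.length_le a _ (p.take t) hp.left hQ
  rw [take_length] at this
  omega

end Walk

theorem exists_isPath_isShortestBetween {P Q : V → Prop}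
    (h : ∃ a b, P a ∧ Q b ∧ G.Reachable a b) :
    ∃ a b, ∃ p : G.Walk a b, p.IsPath ∧ p.IsShortestBetween P Q := by
  classical
  have hex : ∃ n, ∃ a b, ∃ p : G.Walk a b, P a ∧ Q b ∧ p.length = n := by
    obtain ⟨a, b, ha, hb, ⟨p⟩⟩ := h
    exact ⟨p.length, a, b, p, ha, hb, rfl⟩
  obtain ⟨a, b, p, ha, hb, hlen⟩ := Nat.find_spec hex
  refine ⟨a, b, p.bypass, p.bypass_isPath, ha, hb, fun a' b' q ha' hb' => ?_⟩
  calc p.bypass.length ≤ p.length := p.length_bypass_le_length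
    _ = Nat.find hex := hlen
    _ ≤ q.length := Nat.find_min' hex ⟨a', b', q, ha', hb', rfl⟩

variable {α : Type*}

def kempeSet (u : V) (c : V → α) (i j : α) : Set V := {x | x ≠ u ∧ (c x = i ∨ c x = j)}

def kempeGraph (G : SimpleGraph V) (u : V) (c : V → α) (i j : α) : SimpleGraph V where
  Adj x y := G.Adj x y ∧ x ∈ kempeSet u c i j ∧ y ∈ kempeSet u c i j
  symm := ⟨fun _ _ h => ⟨h.1.symm, h.2.2, h.2.1⟩⟩
  loopless := ⟨fun _ h => G.irrefl h.1⟩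

variable {u : V} {c : V → α} {i j : α}

theorem Reachable.mem_kempeSet {x y : V} (h : (kempeGraph G u c i j).Reachable x y)
    (hx : x ∈ kempeSet u c i j) : y ∈ kempeSet u c i j := by
  obtain ⟨q⟩ := h.symm
  cases q with
  | nil => exact hx
  | cons hadj _ => exact hadj.2.1

open Classical in
noncomputable def kempeSwap (c : V → α) (i j : α) (P : Set V) : V → α :=
  fun x => if x ∈ P then Equiv.swap i j (c x) else c x

theorem kempeSwap_ne_of_adj (hc : ∀ v w, v ≠ u → w ≠ u → G.Adj v w → c v ≠ c w) {P : Set V}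
    (hPK : P ⊆ kempeSet u c i j) (hP : ∀ x y, x ∈ P → (kempeGraph G u c i j).Adj x y → y ∈ P)
    {x y : V} (hx : x ≠ u) (hy : y ≠ u) (hxy : G.Adj x y) :
    kempeSwap c i j P x ≠ kempeSwap c i j P y := by
  classical
  have hcross : ∀ x y, x ≠ u → y ≠ u → G.Adj x y → x ∈ P → y ∉ P →
      kempeSwap c i j P x ≠ kempeSwap c i j P y := by
    intro x y hx hy hxy hxP hyP
    have hyK : y ∉ kempeSet u c i j := fun hyK => hyP (hP x y hxP ⟨hxy, hPK hxP, hyK⟩)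
    simp only [kempeSet, Set.mem_ofPred_eq, not_and, not_or] at hyK
    obtain ⟨hyi, hyj⟩ := hyK hy
    simp only [kempeSwap, if_pos hxP, if_neg hyP]
    rcases (hPK hxP).2 with hxi | hxj
    · rw [hxi, Equiv.swap_apply_left]; exact Ne.symm hyj
    · rw [hxj, Equiv.swap_apply_right]; exact Ne.symm hyi
  by_cases hxP : x ∈ P <;> by_cases hyP : y ∈ P
  · simp only [kempeSwap, if_pos hxP, if_pos hyP]
    exact (Equiv.swap i j).injective.ne (hc x y hx hy hxy)
  · exact hcross x y hx hy hxy hxP hyP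
  · exact (hcross y x hy hx hxy.symm hyP hxP).symm
  · simp only [kempeSwap, if_neg hxP, if_neg hyP]
    exact hc x y hx hy hxy

theorem nonempty_coloring_of_not_exists_kempe_chain
    (hc : ∀ v w, v ≠ u → w ≠ u → G.Adj v w → c v ≠ c w)
    (h : ¬∃ a b, (G.Adj u a ∧ c a = i) ∧ (G.Adj u b ∧ c b = j) ∧
      (kempeGraph G u c i j).Reachable a b) :
    Nonempty (G.Coloring α) := by
  classical
  let P : Set V := {x | ∃ a, (G.Adj u a ∧ c a = i) ∧ (kempeGraph G u c i j).Reachable a x}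
  have hPK : P ⊆ kempeSet u c i j := fun x ⟨a, ⟨hua, hca⟩, hax⟩ =>
    hax.mem_kempeSet ⟨(G.ne_of_adj hua).symm, Or.inl hca⟩
  have hP : ∀ x y, x ∈ P → (kempeGraph G u c i j).Adj x y → y ∈ P :=
    fun x y ⟨a, ha, hax⟩ hxy => ⟨a, ha, hax.trans hxy.reachable⟩
  have hnbr : ∀ w, G.Adj u w → kempeSwap c i j P w ≠ i := by
    intro w huw
    by_cases hwP : w ∈ P
    · obtain ⟨a, ha, haw⟩ := hwP
      have hwj : c w ≠ j := fun hwj => h ⟨a, w, ha, ⟨huw, hwj⟩, haw⟩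
      have hwi : c w = i := ((hPK ⟨a, ha, haw⟩).2).resolve_right hwj
      simp only [kempeSwap, if_pos (show w ∈ P from ⟨a, ha, haw⟩), hwi, Equiv.swap_apply_left]
      exact hwi ▸ Ne.symm hwj
    · simp only [kempeSwap, if_neg hwP]
      exact fun hwi => hwP ⟨w, ⟨huw, hwi⟩, Reachable.refl w⟩
  refine ⟨Coloring.mk (Function.update (kempeSwap c i j P) u i) fun {x y} hxy => ?_⟩
  rcases eq_or_ne x u with rfl | hx
  · rw [Function.update_self, Function.update_of_ne (G.ne_of_adj hxy).symm]
    exact (hnbr y hxy).symm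
  rcases eq_or_ne y u with rfl | hy
  · rw [Function.update_self, Function.update_of_ne hx]
    exact hnbr x hxy.symm
  rw [Function.update_of_ne hx, Function.update_of_ne hy]
  exact kempeSwap_ne_of_adj hc hPK hP hx hy hxy

theorem odd_length_of_kempe_chain (hc : ∀ v w, v ≠ u → w ≠ u → G.Adj v w → c v ≠ c w)
    (hij : i ≠ j) {a b : V} (p : (kempeGraph G u c i j).Walk a b) (ha : c a = i) (hb : c b = j) :
    Odd p.length := by
  classical
  let col : (kempeGraph G u c i j).Coloring Bool :=
    Coloring.mk (fun x => decide (c x = i)) fun {x y} h => by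
      have hne := hc x y h.2.1.1 h.2.2.1 h.1
      rcases h.2.1.2 with hx | hx <;> rcases h.2.2.2 with hy | hy <;> simp_all [Ne.symm hij]
  rw [col.odd_length_iff_not_congr]
  show ¬decide (c a = i) ↔ decide (c b = i)
  simp [ha, hb, Ne.symm hij]

theorem nonempty_cycleGraph_embedding_of_shortest_kempe_chain {a b : V} {p : (kempeGraph G u c i j).Walk a b} (hp : p.IsPath)
    (hshort : p.IsShortestBetween (fun x => G.Adj u x ∧ c x = i) (fun x => G.Adj u x ∧ c x = j)) :
    Nonempty (cycleGraph (p.length + 2) ↪g G) := by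
  have hK : ∀ t, p.getVert t ∈ kempeSet u c i j := fun t =>
    (p.take t).reachable.mem_kempeSet ⟨(G.ne_of_adj hshort.left.1).symm, Or.inl hshort.left.2⟩
  obtain ⟨e, he⟩ := exists_pathGraph_embedding (f := p.getVert) hp.getVert_injOn
    (fun t ht => (p.adj_getVert_succ ht).1)
    (fun s t hst ht hadj => hshort.not_adj_getVert hst ht ⟨hadj, hK s, hK t⟩)
  refine nonempty_cycleGraph_embedding_of_apex e u (fun s => he s ▸ (hK s).1) fun s => ?_
  have hs := s.isLt
  rw [he]
  constructor
  · intro hadj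
    by_contra! hmid
    rcases (hK s).2 with hci | hcj
    · exact hshort.not_left_getVert (by omega) (by omega) ⟨hadj, hci⟩
    · exact hshort.not_right_getVert (by omega) ⟨hadj, hcj⟩
  · rintro (h0 | hlen)
    · simpa [h0] using hshort.left.1
    · simpa [hlen] using hshort.right.1

end SimpleGraph

open SimpleGraph

theorem statement_6_general {V : Type*} (G : SimpleGraph V)
    (hfree : ¬ G.HasOddHole) (u : V) (k : ℕ)
    (hχ : (k : ℕ∞) < G.chromaticNumber)
    (c : V → Fin k) (hc : ∀ v w, v ≠ u → w ≠ u → G.Adj v w → c v ≠ c w)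
    (i j : Fin k) (hij : i ≠ j) :
    ∃ v w, G.Adj u v ∧ G.Adj u w ∧ G.Adj v w ∧ c v = i ∧ c w = j := by
  have hchain : ∃ a b, (G.Adj u a ∧ c a = i) ∧ (G.Adj u b ∧ c b = j) ∧
      (kempeGraph G u c i j).Reachable a b := by
    by_contra h
    exact hχ.not_ge (Colorable.chromaticNumber_le (nonempty_coloring_of_not_exists_kempe_chain hc h))
  obtain ⟨a, b, p, hp, hshort⟩ := exists_isPath_isShortestBetween hchain
  obtain ⟨m, hm⟩ := odd_length_of_kempe_chain hc hij p hshort.left.2 hshort.right.2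
  rcases Nat.eq_zero_or_pos m with rfl | hm₀
  · exact ⟨a, b, hshort.left.1, hshort.right.1, (p.adj_of_length_eq_one hm).1,
      hshort.left.2, hshort.right.2⟩
  · exact (hfree ⟨p.length + 2, hm ▸ ⟨m + 1, by ring⟩, by omega,
      nonempty_cycleGraph_embedding_of_shortest_kempe_chain hp hshort⟩).elim

/-- Let `G` be odd-hole-free with `χ(G) > k`, and let `c` be a proper
`k`-coloring of `G - u`.  For any two distinct colors `i, j` each used on a neighbour of `u`,
there are adjacent neighbours `v, w` of `u` with `c v = i` and `c w = j`. -/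
theorem statement_6 {V : Type*} [Fintype V] (G : SimpleGraph V)
    (hfree : ¬ G.HasOddHole) (u : V) (k : ℕ) (hk : 0 < k)
    (hχ : (k : ℕ∞) < G.chromaticNumber)
    (c : V → Fin k) (hc : ∀ v w, v ≠ u → w ≠ u → G.Adj v w → c v ≠ c w)
    (i j : Fin k) (hij : i ≠ j)
    (hi : ∃ v, G.Adj u v ∧ c v = i) (hj : ∃ w, G.Adj u w ∧ c w = j) :
    ∃ v w, G.Adj u v ∧ G.Adj u w ∧ G.Adj v w ∧ c v = i ∧ c w = j :=
  statement_6_general G hfree u k hχ c hc i j hij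
end

section
/- Let G be a minimum counterexample to the statement 'every odd-hole-free graph H with Δ(H) ≥ 7 satisfies χ(H) ≤ max{Δ(H) − 1, ω(H)}', and let u be a vertex of G with degree Δ(G). Then every proper coloring of G − u with Δ(G) − 1 colors assigns the same color to exactly one pair of distinct neighbors of u, and assigns pairwise distinct colors to all other neighbors of u; in particular, the Δ(G) neighbors of u receive exactly Δ(G) − 1 distinct colors. -/
/-- In a minimum counterexample `G` to "every odd-hole-free graph `H` with
`Δ(H) ≥ 7` satisfies `χ(H) ≤ max (Δ(H) - 1) (ω(H))`", for a vertex `u` of maximum degree,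
every proper `(Δ(G) - 1)`-coloring of `G - u` identifies exactly one pair of distinct
neighbours of `u` and colors the remaining neighbours pairwise differently; in particular
the `Δ(G)` neighbours of `u` receive exactly `Δ(G) - 1` distinct colors. -/
theorem statement_8 {V : Type} [Fintype V] [DecidableEq V]
    (G : SimpleGraph V) [DecidableRel G.Adj]
    (hfree : ¬ G.HasOddHole) (hΔ : 7 ≤ G.maxDegree)
    (hcex : (max (G.maxDegree - 1) G.cliqueNum : ℕ) < G.chromaticNumber)
    (hmin : ∀ (W : Type) [Fintype W] (H : SimpleGraph W) [DecidableRel H.Adj],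
      Fintype.card W < Fintype.card V → ¬ H.HasOddHole → 7 ≤ H.maxDegree →
      H.chromaticNumber ≤ (max (H.maxDegree - 1) H.cliqueNum : ℕ))
    (u : V) (hu : G.degree u = G.maxDegree) :
    ∀ c : V → Fin (G.maxDegree - 1),
      (∀ v w, v ≠ u → w ≠ u → G.Adj v w → c v ≠ c w) →
      (∃ x y, x ≠ y ∧ G.Adj u x ∧ G.Adj u y ∧ c x = c y ∧
        ∀ v w, G.Adj u v → G.Adj u w → v ≠ w → c v = c w →
          (v = x ∧ w = y) ∨ (v = y ∧ w = x)) ∧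
      ((G.neighborFinset u).image c).card = G.maxDegree - 1 := by
  intro c hc
  have hscard : (G.neighborFinset u).card = G.maxDegree := by
    rw [G.card_neighborFinset_eq_degree, hu]
  have himg_le : ((G.neighborFinset u).image c).card ≤ G.maxDegree - 1 := by
    have := Finset.card_le_card (Finset.subset_univ ((G.neighborFinset u).image c))
    simpa using this
  -- the image has exactly `G.maxDegree - 1` colors
  have himg : ((G.neighborFinset u).image c).card = G.maxDegree - 1 := by
    by_contra h
    have hlt : ((G.neighborFinset u).image c).card < G.maxDegree - 1 := lt_of_le_of_ne himg_le h
    obtain ⟨a, ha⟩ : ∃ a : Fin (G.maxDegree - 1), a ∉ (G.neighborFinset u).image c := by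
      by_contra hall
      push_neg at hall
      have hsub : (Finset.univ : Finset (Fin (G.maxDegree - 1))) ⊆ (G.neighborFinset u).image c := fun x _ => hall x
      have := Finset.card_le_card hsub
      simp only [Finset.card_univ, Fintype.card_fin] at this
      omega
    have hcol : G.Colorable (G.maxDegree - 1) := by
      refine ⟨SimpleGraph.Coloring.mk (fun v => if v = u then a else c v) ?_⟩
      intro v w hvw
      by_cases hv : v = u
      · have hwu : w ≠ u := by rw [← hv]; exact hvw.ne'
        rw [if_pos hv, if_neg hwu]
        intro heq
        refine ha (heq ▸ Finset.mem_image_of_mem c ?_)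
        rw [SimpleGraph.mem_neighborFinset, ← hv]; exact hvw
      · by_cases hw : w = u
        · rw [if_neg hv, if_pos hw]
          intro heq
          refine ha (heq.symm ▸ Finset.mem_image_of_mem c ?_)
          rw [SimpleGraph.mem_neighborFinset, ← hw]; exact hvw.symm
        · rw [if_neg hv, if_neg hw]
          exact hc v w hv hw hvw
    have hle := hcol.chromaticNumber_le
    have h1 : G.chromaticNumber ≤ (max (G.maxDegree - 1) G.cliqueNum : ℕ) := by
      refine hle.trans ?_
      exact_mod_cast Nat.cast_le.mpr (le_max_left _ _)
    exact absurd (lt_of_lt_of_le hcex h1) (lt_irrefl _)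
  -- `c` is not injective on the neighbours
  have hninj : ¬ Set.InjOn c ↑(G.neighborFinset u) := by
    intro hinj
    have := Finset.card_image_of_injOn hinj
    rw [himg, hscard] at this
    omega
  rw [Set.InjOn] at hninj
  push_neg at hninj
  obtain ⟨x, hx, y, hy, hcxy, hxy⟩ := hninj
  simp only [Finset.coe_mem, Finset.mem_coe] at hx hy
  -- after erasing one member of the colliding pair, `c` is injective
  have erase_inj : ∀ a b : V, a ∈ G.neighborFinset u → b ∈ G.neighborFinset u → a ≠ b → c a = c b →
      Set.InjOn c ↑((G.neighborFinset u).erase a) := by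
    intro a b ha hb hab hcab
    rw [← Finset.card_image_iff]
    have h1 : ((G.neighborFinset u).erase a).image c = (G.neighborFinset u).image c := by
      apply Finset.Subset.antisymm (Finset.image_subset_image (Finset.erase_subset _ _))
      intro d hd
      obtain ⟨z, hz, rfl⟩ := Finset.mem_image.mp hd
      by_cases hza : z = a
      · subst hza
        exact Finset.mem_image.mpr ⟨b, Finset.mem_erase.mpr ⟨hab.symm, hb⟩, hcab.symm⟩
      · exact Finset.mem_image.mpr ⟨z, Finset.mem_erase.mpr ⟨hza, hz⟩, rfl⟩
    rw [h1, himg, Finset.card_erase_of_mem ha, hscard]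
  have hIx := erase_inj x y hx hy hxy hcxy
  have hIy := erase_inj y x hy hx hxy.symm hcxy.symm
  have hxadj : G.Adj u x := by rwa [SimpleGraph.mem_neighborFinset] at hx
  have hyadj : G.Adj u y := by rwa [SimpleGraph.mem_neighborFinset] at hy
  refine ⟨⟨x, y, hxy, hxadj, hyadj, hcxy, ?_⟩, himg⟩
  intro v w hv hw hvw hcvw
  have hvs : v ∈ G.neighborFinset u := by rw [SimpleGraph.mem_neighborFinset]; exact hv
  have hws : w ∈ G.neighborFinset u := by rw [SimpleGraph.mem_neighborFinset]; exact hw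
  have hX : v = x ∨ w = x := by
    by_contra hcon
    push_neg at hcon
    exact hvw (hIx (Finset.mem_coe.mpr (Finset.mem_erase.mpr ⟨hcon.1, hvs⟩))
      (Finset.mem_coe.mpr (Finset.mem_erase.mpr ⟨hcon.2, hws⟩)) hcvw)
  have hY : v = y ∨ w = y := by
    by_contra hcon
    push_neg at hcon
    exact hvw (hIy (Finset.mem_coe.mpr (Finset.mem_erase.mpr ⟨hcon.1, hvs⟩))
      (Finset.mem_coe.mpr (Finset.mem_erase.mpr ⟨hcon.2, hws⟩)) hcvw)
  rcases hX with rfl | rfl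
  · rcases hY with h | rfl
    · exact absurd h hxy
    · exact Or.inl ⟨rfl, rfl⟩
  · rcases hY with rfl | h
    · exact Or.inr ⟨rfl, rfl⟩
    · exact absurd h hxy
end

section
/- Let G be a finite simple graph, let u be a vertex of G, and let c be a proper coloring of G − u. Let i and j be two distinct colors such that some neighbor of u is colored i, some neighbor of u is colored j, and no edge of G joins a neighbor of u colored i to a neighbor of u colored j. If the connected component, in the subgraph of G − u induced by the vertices colored i or j, containing a given neighbor of u colored i also contains some neighbor of u colored j, then a shortest induced path in that component from that i-colored neighbor of u to a j-colored neighbor of u has odd length at least 3. -/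
/-!
The colour classes `i` and `j` split the subgraph they induce in `G - u` into two sides, so every
walk in it from an `i`-coloured vertex to a `j`-coloured one has odd length. Length `1` is ruled out
because no `i`-coloured neighbour of `u` is adjacent to a `j`-coloured one.
-/

namespace SimpleGraph

variable {V α : Type*} {G : SimpleGraph V}

def Coloring.ofTwoValued [DecidableEq α] (c : V → α) (hc : ∀ v w, G.Adj v w → c v ≠ c w)
    {i j : α} (hval : ∀ v, c v = i ∨ c v = j) : G.Coloring Bool :=
  Coloring.mk (fun v => decide (c v = i)) fun {v w} hvw hsame => hc v w hvw <| by
    rw [decide_eq_decide] at hsame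
    rcases hval v with hv | hv <;> rcases hval w with hw | hw <;> grind

theorem Walk.odd_length_of_twoValued_coloring (c : V → α) (hc : ∀ v w, G.Adj v w → c v ≠ c w)
    {i j : α} (hij : i ≠ j) (hval : ∀ v, c v = i ∨ c v = j) {a b : V} (p : G.Walk a b)
    (ha : c a = i) (hb : c b = j) : Odd p.length := by
  classical
  rw [(Coloring.ofTwoValued c hc hval).odd_length_iff_not_congr p]
  simp only [Coloring.ofTwoValued, Coloring.mk, RelHom.coeFn_mk, ha, hb]
  simp [hij.symm]

end SimpleGraph

theorem statement_11_general {V α : Type*} (G : SimpleGraph V) (u : V)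
    (c : V → α) (hc : ∀ v w, v ≠ u → w ≠ u → G.Adj v w → c v ≠ c w)
    (i j : α) (hij : i ≠ j)
    (hnoedge : ∀ v w, G.Adj u v → G.Adj u w → c v = i → c w = j → ¬ G.Adj v w)
    (x : V) (hux : G.Adj u x) (hcx : c x = i) :
    let S : Set V := {v | v ≠ u ∧ (c v = i ∨ c v = j)}
    let H : SimpleGraph S := G.induce S
    ∀ hxS : x ∈ S,
      (∃ y, ∃ hyS : y ∈ S, G.Adj u y ∧ c y = j ∧ H.Reachable ⟨x, hxS⟩ ⟨y, hyS⟩) →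
      ∀ (y : V) (hyS : y ∈ S), G.Adj u y → c y = j →
        ∀ p : H.Walk ⟨x, hxS⟩ ⟨y, hyS⟩, p.IsPath →
          (∀ a b, a ∈ p.support → b ∈ p.support → H.Adj a b → s(a, b) ∈ p.edges) →
          (∀ (y' : V) (hy'S : y' ∈ S), G.Adj u y' → c y' = j →
            ∀ q : H.Walk ⟨x, hxS⟩ ⟨y', hy'S⟩, q.IsPath →
              (∀ a b, a ∈ q.support → b ∈ q.support → H.Adj a b → s(a, b) ∈ q.edges) →
              p.length ≤ q.length) →
          Odd p.length ∧ 3 ≤ p.length := by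
  intro S H hxS _ y hyS huy hcy p _ _ _
  have hodd : Odd p.length :=
    p.odd_length_of_twoValued_coloring (fun v : S => c v)
      (fun v w hvw => hc v w v.2.1 w.2.1 hvw) hij (fun v => v.2.2) hcx hcy
  have hlength_ne_one : p.length ≠ 1 := fun h =>
    hnoedge x y hux huy hcx hcy (p.adj_of_length_eq_one h)
  refine ⟨hodd, ?_⟩
  obtain ⟨k, hk⟩ := hodd
  omega

/-- Let `c` be a proper coloring of `G - u`, let `i ≠ j` be colors each used
on some neighbour of `u`, with no edge joining an `i`-colored neighbour of `u` to a `j`-colored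
neighbour of `u`.  Let `x` be a neighbour of `u` colored `i`.  If, in the subgraph of `G - u`
induced by the vertices colored `i` or `j`, the component of `x` contains a neighbour of `u`
colored `j`, then any shortest induced path in that subgraph from `x` to a `j`-colored
neighbour of `u` has odd length at least 3. -/
theorem statement_11 {V α : Type*} [Fintype V] (G : SimpleGraph V) (u : V)
    (c : V → α) (hc : ∀ v w, v ≠ u → w ≠ u → G.Adj v w → c v ≠ c w)
    (i j : α) (hij : i ≠ j)
    (hj : ∃ w, G.Adj u w ∧ c w = j)
    (hnoedge : ∀ v w, G.Adj u v → G.Adj u w → c v = i → c w = j → ¬ G.Adj v w)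
    (x : V) (hux : G.Adj u x) (hcx : c x = i) :
    let S : Set V := {v | v ≠ u ∧ (c v = i ∨ c v = j)}
    let H : SimpleGraph S := G.induce S
    ∀ hxS : x ∈ S,
      (∃ y, ∃ hyS : y ∈ S, G.Adj u y ∧ c y = j ∧ H.Reachable ⟨x, hxS⟩ ⟨y, hyS⟩) →
      ∀ (y : V) (hyS : y ∈ S), G.Adj u y → c y = j →
        ∀ p : H.Walk ⟨x, hxS⟩ ⟨y, hyS⟩, p.IsPath →
          (∀ a b, a ∈ p.support → b ∈ p.support → H.Adj a b → s(a, b) ∈ p.edges) →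
          (∀ (y' : V) (hy'S : y' ∈ S), G.Adj u y' → c y' = j →
            ∀ q : H.Walk ⟨x, hxS⟩ ⟨y', hy'S⟩, q.IsPath →
              (∀ a b, a ∈ q.support → b ∈ q.support → H.Adj a b → s(a, b) ∈ q.edges) →
              p.length ≤ q.length) →
          Odd p.length ∧ 3 ≤ p.length :=
  statement_11_general G u c hc i j hij hnoedge x hux hcx
end
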